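/- arXiv:1811.11734 — 2 statements merged into one kernel-verified Lean document; each statement's English description precedes it below -/
import Mathlib

section
/- Let (T,c) be an algebraic tree with intervals [x,y] := {w : c(x,y,w)=w}. Then for all x,y,z ∈ T, [x,y] ∩ [y,z] = [c(x,y,z), y]. -/
/-! Two order properties of intervals follow from the 4-point condition: towards a common end they
are nested (`v ∈ [x,y]` gives `[v,y] ⊆ [x,y]`), and a point `m ∈ [x,w]` with `w ∈ [x,y]` cuts
`[x,y]` so that `w ∈ [m,y]`. For `m = c(x,y,z)`, nesting gives `[m,y] ⊆ [x,y] ∩ [y,z]`.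
Conversely, for `w` in both intervals the 4-point condition on `x,y,z,w` makes `m` either `w`
or the median `c(x,z,w) ∈ [x,w]`, and cutting puts `w` in `[m,y]`. -/

variable {T : Type*}

/-- An algebraic tree: a symmetric branch point map satisfying the
2-point, 3-point and 4-point conditions (BPM1)–(BPM4). -/
def IsAlgTree (c : T → T → T → T) : Prop :=
  (∀ x y z, c x y z = c y x z) ∧
  (∀ x y z, c x y z = c x z y) ∧
  (∀ x y, c x y y = y) ∧
  (∀ x y z, c x y (c x y z) = c x y z) ∧
  (∀ x₁ x₂ x₃ x₄, c x₁ x₂ x₃ = c x₁ x₂ x₄ ∨ c x₁ x₂ x₃ = c x₁ x₃ x₄ ∨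
    c x₁ x₂ x₃ = c x₂ x₃ x₄)

/-- The interval `[x,y] = {w : c(x,y,w) = w}`. -/
def interval (c : T → T → T → T) (x y : T) : Set T := {w | c x y w = w}

section

variable {c : T → T → T → T} {x y z v w m : T}

theorem mem_interval : w ∈ interval c x y ↔ c x y w = w := Iff.rfl

namespace IsAlgTree

variable (hc : IsAlgTree c)
include hc

theorem comm12 (x y z : T) : c x y z = c y x z := hc.1 x y z

theorem comm23 (x y z : T) : c x y z = c x z y := hc.2.1 x y z

theorem rotate (x y z : T) : c x y z = c y z x := by
  rw [hc.comm12, hc.comm23]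

theorem four_point (x₁ x₂ x₃ x₄ : T) :
    c x₁ x₂ x₃ = c x₁ x₂ x₄ ∨ c x₁ x₂ x₃ = c x₁ x₃ x₄ ∨ c x₁ x₂ x₃ = c x₂ x₃ x₄ :=
  hc.2.2.2.2 x₁ x₂ x₃ x₄

theorem right_mem_interval (x y : T) : y ∈ interval c x y := hc.2.2.1 x y

theorem left_mem_interval (x y : T) : x ∈ interval c x y := by
  rw [mem_interval, hc.comm12, hc.comm23]
  exact hc.right_mem_interval y x

theorem interval_comm (x y : T) : interval c x y = interval c y x := by
  ext w
  rw [mem_interval, mem_interval, hc.comm12]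

theorem median_mem_interval (x y z : T) : c x y z ∈ interval c x y := hc.2.2.2.1 x y z

theorem median_mem_interval' (x y z : T) : c x y z ∈ interval c x z := by
  rw [hc.comm23]
  exact hc.median_mem_interval x z y

theorem eq_of_mem_interval_of_mem_interval (hv : v ∈ interval c x w)
    (hw : w ∈ interval c x v) : v = w := by
  rw [mem_interval] at hv hw
  rw [← hv, hc.comm23, hw]

theorem interval_subset_interval_of_mem (hv : v ∈ interval c x y) :
    interval c v y ⊆ interval c x y := by
  intro w hw
  rw [mem_interval] at hv hw ⊢
  rcases hc.four_point v y w x with hwv | hwx | hwy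
  · rw [hw, hc.comm12, ← hc.rotate, hv] at hwv
    rwa [hwv]
  · -- now `w ∈ [x,v]`; of the three values the 4-point condition allows for `c(x,y,w)`, only `v` needs work
    have hw' : w ∈ interval c x v := by rw [mem_interval, hc.rotate, ← hwx, hw]
    rcases hc.four_point x y w v with h | h | h
    · have hvw : v = w := by
        refine hc.eq_of_mem_interval_of_mem_interval ?_ hw'
        rw [← hv, ← h]
        exact hc.median_mem_interval' x y w
      rw [h, hv, hvw]
    · rw [h, hc.comm23]; exact hw'
    · rw [h, ← hc.rotate, hw]
  · rw [hw, ← hc.rotate] at hwy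
    exact hwy.symm

theorem mem_interval_of_mem_of_mem_interval (hm : m ∈ interval c x w)
    (hw : w ∈ interval c x y) : w ∈ interval c m y := by
  rw [mem_interval] at hm hw
  rcases hc.four_point x y w m with h | h | h
  · have hwm : w = m := by
      refine hc.eq_of_mem_interval_of_mem_interval ?_ hm
      rw [← hw, h]
      exact hc.median_mem_interval' x y m
    rw [hwm]
    exact hc.left_mem_interval m y
  · rw [hw, hm] at h
    rw [h]
    exact hc.left_mem_interval m y
  · rw [mem_interval, hc.rotate, ← h, hw]

end IsAlgTree

end

theorem stmt_3_general (c : T → T → T → T) (hc : IsAlgTree c)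
    (x y z : T) :
    interval c x y ∩ interval c y z = interval c (c x y z) y := by
  refine Set.Subset.antisymm ?_ fun w hw => ⟨?_, ?_⟩
  · rintro w ⟨hxy, hyz⟩
    rcases hc.four_point x y z w with h | h | h
    · rw [h, hxy]
      exact hc.left_mem_interval w y
    · have hm : c x y z ∈ interval c x w := h ▸ hc.median_mem_interval' x z w
      exact hc.mem_interval_of_mem_of_mem_interval hm hxy
    · rw [h, hyz]
      exact hc.left_mem_interval w y
  · exact hc.interval_subset_interval_of_mem (hc.median_mem_interval x y z) hw
  · have hm : c x y z ∈ interval c z y := by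
      rw [hc.rotate, hc.comm12]
      exact hc.median_mem_interval z y x
    rw [hc.interval_comm]
    exact hc.interval_subset_interval_of_mem hm hw

theorem stmt_3 [Nonempty T] (c : T → T → T → T) (hc : IsAlgTree c)
    (x y z : T) :
    interval c x y ∩ interval c y z = interval c (c x y z) y :=
  stmt_3_general c hc x y z
end

section
/- Let (T,c) be an algebraic tree with component topology τ. Then every interval [x,y] = {z : c(x,y,z)=z} is closed in τ. -/
variable {T : Type*}

/-- The component `S_x(y)` of `T \ {x}` containing `y`. -/
def component (c : T → T → T → T) (x y : T) : Set T := {z | z ≠ x ∧ c x y z ≠ x}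

/-- The component topology, generated by the components `S_x(y)`, `x ≠ y`. -/
def componentTopology (c : T → T → T → T) : TopologicalSpace T :=
  TopologicalSpace.generateFrom {S | ∃ x y, x ≠ y ∧ S = component c x y}

/-!
The complement of `[x,y]` is open: for `z ∉ [x,y]` let `p = c(x,y,z)` be the projection of `z`
onto `[x,y]`. Then `p ≠ z`, and the component `S_p(z)` contains `z` but misses `[x,y]`, because
by the 4-point condition every `w ∈ [x,y]` satisfies `c(p,z,w) = p`.
-/

namespace IsAlgTree

variable {c : T → T → T → T}

theorem rotate_s16 (hc : IsAlgTree c) (a b d : T) : c a b d = c b d a :=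
  (hc.1 a b d).trans (hc.2.1 b a d)

theorem apply_apply_left (hc : IsAlgTree c) (a b d : T) : c (c a b d) b d = c a b d := by
  rw [hc.rotate_s16 (c a b d), hc.rotate_s16 a b d, hc.2.2.2.1]

theorem apply_projection_eq_of_mem_interval (hc : IsAlgTree c) {x y w : T}
    (hw : w ∈ interval c x y) (z : T) : c (c x y z) z w = c x y z := by
  rcases hc.2.2.2.2 x y z w with h | h | h
  · rw [show c x y w = w from hw] at h
    rw [h, hc.rotate_s16, hc.2.2.1]
  · rw [h, hc.apply_apply_left]
  · rw [h, hc.apply_apply_left]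

theorem notMem_component_projection (hc : IsAlgTree c) {x y w : T}
    (hw : w ∈ interval c x y) (z : T) : w ∉ component c (c x y z) z :=
  fun hmem => hmem.2 (hc.apply_projection_eq_of_mem_interval hw z)

theorem mem_component_self (hc : IsAlgTree c) {a z : T} (h : z ≠ a) : z ∈ component c a z :=
  ⟨h, by rwa [hc.2.2.1]⟩

theorem compl_interval_eq_biUnion (hc : IsAlgTree c) (x y : T) :
    (interval c x y)ᶜ = ⋃ z ∈ (interval c x y)ᶜ, component c (c x y z) z := by
  ext w
  simp only [Set.mem_iUnion, exists_prop]
  constructor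
  · intro hw
    exact ⟨w, hw, hc.mem_component_self fun h => hw h.symm⟩
  · rintro ⟨z, -, hwz⟩ hw
    exact hc.notMem_component_projection hw z hwz

end IsAlgTree

theorem isOpen_component {c : T → T → T → T} {a b : T} (h : a ≠ b) :
    @IsOpen T (componentTopology c) (component c a b) :=
  TopologicalSpace.GenerateOpen.basic _ ⟨a, b, h, rfl⟩

theorem stmt_16_general (c : T → T → T → T) (hc : IsAlgTree c) (x y : T) :
    @IsClosed T (componentTopology c) (interval c x y) := by
  let _ : TopologicalSpace T := componentTopology c
  rw [← isOpen_compl_iff, hc.compl_interval_eq_biUnion]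
  exact isOpen_biUnion fun z hz => isOpen_component hz

theorem stmt_16 [Nonempty T] (c : T → T → T → T) (hc : IsAlgTree c) (x y : T) :
    @IsClosed T (componentTopology c) (interval c x y) :=
  stmt_16_general c hc x y
end
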